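/- arXiv:0707.3539 — 2 statements merged into one kernel-verified Lean document; each statement's English description precedes it below -/
import Mathlib

section
/- Every ℂ-linear map D : M_n(ℂ) → M_n(ℂ) that is a derivation of the associative matrix product (D(AB) = D(A)B + A D(B) for all A, B) and is compatible with the adjoint (D(Aᴴ) = D(A)ᴴ for all A) is of the form D(A) = i(HA − AH) for some Hermitian matrix H; that is, the linear equations of motion preserving both the Jordan and Lie products on observables are exactly the infinitesimal generators of unitary transformations. -/
/-!
Every derivation of `Mₙ(R)` is inner. Fix an index `i₀` and the matrix units `Eᵢⱼ`; from the
Leibniz rule and `∑ₖ Eₖᵢ₀ Eᵢ₀ₖ = 1` one gets `D = [M, ·]` for `M = ∑ₖ D(Eₖᵢ₀) Eᵢ₀ₖ`.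
Compatibility with the adjoint then says exactly that `M + Mᴴ` is central, so in the
decomposition `M = ℜ M + i ℑ M` the real part drops out of the commutator and
`D = i [ℑ M, ·]` with `ℑ M` Hermitian.
-/

open Matrix
open scoped ComplexStarModule

namespace Matrix

variable {n R : Type*} [Fintype n] [DecidableEq n] [CommRing R]

theorem sum_single_mul_single_eq_one (i₀ : n) :
    ∑ k, single k i₀ (1 : R) * single i₀ k 1 = 1 := by
  simp only [single_mul_single_same, mul_one, sum_single_one]

def derivationGenerator (D : Matrix n n R →ₗ[R] Matrix n n R) (i₀ : n) : Matrix n n R :=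
  ∑ k, D (single k i₀ 1) * single i₀ k 1

variable {D : Matrix n n R →ₗ[R] Matrix n n R}

theorem derivationGenerator_mul_single (i₀ i j : n) :
    derivationGenerator D i₀ * single i j 1 = D (single i i₀ 1) * single i₀ j 1 := by
  rw [derivationGenerator, Finset.sum_mul, Finset.sum_eq_single i]
  · rw [mul_assoc, single_mul_single_same, one_mul]
  · intro k _ hk
    rw [mul_assoc, single_mul_single_of_ne (h := hk), mul_zero]
  · simp

theorem single_mul_derivationGenerator
    (hder : ∀ A B : Matrix n n R, D (A * B) = D A * B + A * D B) (i₀ i j : n) :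
    single i j 1 * derivationGenerator D i₀ =
      D (single i i₀ 1) * single i₀ j 1 - D (single i j 1) := by
  have leibniz (k : n) : single i j 1 * (D (single k i₀ 1) * single i₀ k 1) =
      D (single i j 1 * single k i₀ 1) * single i₀ k 1 -
        D (single i j 1) * (single k i₀ 1 * single i₀ k 1) := by
    rw [hder, add_mul, mul_assoc, mul_assoc]; abel
  rw [derivationGenerator, Finset.mul_sum, Finset.sum_congr rfl fun k _ => leibniz k,
    Finset.sum_sub_distrib, ← Finset.mul_sum, sum_single_mul_single_eq_one, mul_one,
    Finset.sum_eq_single j]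
  · rw [single_mul_single_same, one_mul]
  · intro k _ hk
    rw [single_mul_single_of_ne (h := Ne.symm hk), map_zero, zero_mul]
  · simp

theorem apply_eq_derivationGenerator_commutator
    (hder : ∀ A B : Matrix n n R, D (A * B) = D A * B + A * D B) (i₀ : n) (A : Matrix n n R) :
    D A = derivationGenerator D i₀ * A - A * derivationGenerator D i₀ := by
  induction A using Matrix.induction_on' with
  | h_zero => simp
  | h_add A B hA hB => rw [map_add, hA, hB]; noncomm_ring
  | h_std_basis i j x =>
    rw [← mul_one x, ← smul_eq_mul, ← smul_single, map_smul, mul_smul_comm, smul_mul_assoc,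
      ← smul_sub, derivationGenerator_mul_single, single_mul_derivationGenerator hder, sub_sub_cancel]

theorem exists_eq_commutator_of_derivation
    (hder : ∀ A B : Matrix n n R, D (A * B) = D A * B + A * D B) :
    ∃ M : Matrix n n R, ∀ A, D A = M * A - A * M := by
  cases isEmpty_or_nonempty n with
  | inl _ => exact ⟨0, fun A => Subsingleton.elim _ _⟩
  | inr h => exact ⟨_, apply_eq_derivationGenerator_commutator hder h.some⟩

end Matrix

theorem commute_add_star_of_commutator_star {A : Type*} [Ring A] [StarRing A] {M : A}
    (h : ∀ x, M * star x - star x * M = star (M * x - x * M)) (x : A) :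
    Commute (M + star M) x := by
  have hx := h (star x)
  rw [star_star, star_sub, star_mul, star_mul, star_star, sub_eq_sub_iff_add_eq_add] at hx
  rw [Commute, SemiconjBy, add_mul, mul_add, hx, add_comm]

theorem commutator_eq_I_smul_commutator_imaginaryPart {A : Type*} [Ring A] [StarRing A]
    [Module ℂ A] [StarModule ℂ A] [IsScalarTower ℂ A A] [SMulCommClass ℂ A A] {M : A}
    (h : ∀ x, Commute (M + star M) x) (x : A) :
    M * x - x * M = Complex.I • ((ℑ M : A) * x - x * ℑ M) := by
  have hre : Commute (ℜ M : A) x := by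
    rw [realPart_apply_coe]; exact (h x).smul_left _
  conv_lhs => rw [← realPart_add_I_smul_imaginaryPart M]
  rw [add_mul, mul_add, hre.eq, smul_mul_assoc, mul_smul_comm, smul_sub]
  abel

/-- Every ℂ-linear `*`-derivation of the matrix algebra `M_n(ℂ)` (a derivation
of the associative product compatible with the conjugate transpose) is inner of
the form `D(A) = i(HA − AH)` for some Hermitian matrix `H`: the linear
equations of motion preserving both the Jordan and Lie products of observables
are exactly the infinitesimal generators of unitary transformations. -/
theorem star_derivation_is_inner_hermitian {n : Type*} [Fintype n] [DecidableEq n]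
    (D : Matrix n n ℂ →ₗ[ℂ] Matrix n n ℂ)
    (hder : ∀ A B : Matrix n n ℂ, D (A * B) = D A * B + A * D B)
    (hstar : ∀ A : Matrix n n ℂ, D Aᴴ = (D A)ᴴ) :
    ∃ H : Matrix n n ℂ, H.IsHermitian ∧
      ∀ A : Matrix n n ℂ, D A = Complex.I • (H * A - A * H) := by
  obtain ⟨M, hM⟩ := exists_eq_commutator_of_derivation hder
  have hcomm := commute_add_star_of_commutator_star (M := M) fun A => by
    rw [← hM, ← hM, star_eq_conjTranspose, star_eq_conjTranspose, hstar]
  exact ⟨ℑ M, (ℑ M).2.isHermitian, fun A =>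
    (hM A).trans (commutator_eq_I_smul_commutator_imaginaryPart hcomm A)⟩
end

section
/- Let ħ > 0 and let ψ : ℝ → ℂ be a Schwartz function. Define the Wigner function W(q,p) = (1/(2πħ)) ∫_ℝ e^{ipx/ħ} ψ(q − x/2)·conj(ψ(q + x/2)) dx. Then for every q ∈ ℝ the function p ↦ W(q,p) is integrable and the marginal property holds: ∫_ℝ W(q,p) dp = |ψ(q)|². -/
/-!
For fixed `q`, the function `p ↦ W(q,p)` is, up to the factor `(2πħ)⁻¹` and the rescaling
`ξ = -p / (2πħ)`, the Fourier transform of `K(x) = ψ(q - x/2) · conj ψ(q + x/2)`. Since `ψ` is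
Schwartz, so are `K` and `𝓕 K`; hence `p ↦ W(q,p)` is integrable, and after the change of variables
its integral is `∫ 𝓕 K = 𝓕⁻ (𝓕 K) 0 = K 0 = |ψ q|²` by Fourier inversion.
-/

open MeasureTheory

/-- The Wigner function of a state `ψ`:
`W(q,p) = (1/(2πħ)) ∫ e^{ipx/ħ} ψ(q − x/2)·conj(ψ(q + x/2)) dx`. -/
noncomputable def wigner (hbar : ℝ) (ψ : ℝ → ℂ) (q p : ℝ) : ℂ :=
  (((2 * Real.pi * hbar : ℝ) : ℂ))⁻¹ *
    ∫ x : ℝ, Complex.exp (Complex.I * (p : ℂ) * (x : ℂ) / (hbar : ℂ)) *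
      (ψ (q - x / 2) * (starRingEnd ℂ) (ψ (q + x / 2)))

open Real FourierTransform ComplexConjugate

lemma antilipschitzWith_const_add_smul {E : Type*} [NormedAddCommGroup E] [NormedSpace ℝ E]
    (a : E) {c : ℝ} (hc : c ≠ 0) : AntilipschitzWith ‖c‖₊⁻¹ (fun x : E => a + c • x) := by
  simp [antilipschitzWith_iff_le_mul_dist, dist_eq_norm, ← smul_sub, norm_smul, field]

noncomputable section

namespace SchwartzMap

section Affine

variable {E F : Type*} [NormedAddCommGroup E] [NormedSpace ℝ E]
  [NormedAddCommGroup F] [NormedSpace ℝ F]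

def compConstAddSMul (f : 𝓢(E, F)) (a : E) {c : ℝ} (hc : c ≠ 0) : 𝓢(E, F) :=
  compCLMOfAntilipschitz ℝ (by fun_prop) (antilipschitzWith_const_add_smul a hc) f

@[simp]
lemma compConstAddSMul_apply (f : 𝓢(E, F)) (a : E) {c : ℝ} (hc : c ≠ 0) (x : E) :
    f.compConstAddSMul a hc x = f (a + c • x) := rfl

end Affine

section Fourier

variable {F : Type*} [NormedAddCommGroup F] [NormedSpace ℂ F] [CompleteSpace F]

theorem integral_fourier {V : Type*} [NormedAddCommGroup V] [InnerProductSpace ℝ V]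
    [FiniteDimensional ℝ V] [MeasurableSpace V] [BorelSpace V]
    (f : 𝓢(V, F)) : ∫ ξ, 𝓕 (f : V → F) ξ = f 0 := by
  have h : 𝓕⁻ (𝓕 f) 0 = f 0 := by rw [fourierInv_fourier_eq]
  rw [fourierInv_coe, fourier_coe, Real.fourierInv_eq] at h
  simpa using h

theorem integral_fourier_comp_mul_left (f : 𝓢(ℝ, F)) (a : ℝ) :
    ∫ ξ, 𝓕 (f : ℝ → F) (a * ξ) = |a⁻¹| • f 0 := by
  rw [Measure.integral_comp_mul_left (fun ξ => 𝓕 (f : ℝ → F) ξ), integral_fourier]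

end Fourier

def wignerKernel (ψ : 𝓢(ℝ, ℂ)) (q : ℝ) : 𝓢(ℝ, ℂ) :=
  pairing (ContinuousLinearMap.mul ℝ ℂ) (ψ.compConstAddSMul q (c := -2⁻¹) (by norm_num))
    (postcompCLM Complex.conjCLE.toContinuousLinearMap
      (ψ.compConstAddSMul q (c := 2⁻¹) (by norm_num)))

lemma coe_wignerKernel (ψ : 𝓢(ℝ, ℂ)) (q : ℝ) :
    ⇑(wignerKernel ψ q) = fun x => ψ (q - x / 2) * conj (ψ (q + x / 2)) := by
  ext x
  simp only [wignerKernel, pairing_apply_apply, compConstAddSMul_apply, smul_eq_mul,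
    postcompCLM_apply, ContinuousLinearEquiv.coe_coe, ContinuousAlgEquiv.coeCLE_apply,
    Complex.conjCAE_apply, ContinuousLinearMap.mul_apply']
  ring_nf

lemma wignerKernel_apply_zero (ψ : 𝓢(ℝ, ℂ)) (q : ℝ) :
    wignerKernel ψ q 0 = ((‖ψ q‖ ^ 2 : ℝ) : ℂ) := by
  simp [coe_wignerKernel, Complex.mul_conj, Complex.normSq_eq_norm_sq]

end SchwartzMap

end

lemma wigner_eq_fourier (hbar : ℝ) (ψ : ℝ → ℂ) (q p : ℝ) :
    wigner hbar ψ q p = ((2 * π * hbar : ℝ) : ℂ)⁻¹ *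
      𝓕 (fun x => ψ (q - x / 2) * conj (ψ (q + x / 2))) (-(2 * π * hbar)⁻¹ * p) := by
  rw [wigner, Real.fourier_eq']
  congr 1
  refine integral_congr_ae (Filter.Eventually.of_forall fun x => ?_)
  simp only [smul_eq_mul, RCLike.inner_apply, conj_trivial]
  congr 2
  push_cast
  field_simp

/-- Marginal property of the Wigner function of a Schwartz state: for each `q`
the function `p ↦ W(q,p)` is integrable and `∫ W(q,p) dp = |ψ(q)|²`. -/
theorem wigner_marginal (hbar : ℝ) (hhbar : 0 < hbar) (ψ : SchwartzMap ℝ ℂ)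
    (q : ℝ) :
    Integrable (fun p : ℝ => wigner hbar (fun x => ψ x) q p) ∧
    ∫ p : ℝ, wigner hbar (fun x => ψ x) q p = ((‖ψ q‖) ^ 2 : ℝ) := by
  set a : ℝ := 2 * π * hbar
  have ha : 0 < a := by positivity
  have hW : (fun p => wigner hbar (fun x => ψ x) q p) =
      fun p => (a : ℂ)⁻¹ * 𝓕 (ψ.wignerKernel q : ℝ → ℂ) (-a⁻¹ * p) := by
    ext p
    rw [SchwartzMap.coe_wignerKernel, wigner_eq_fourier]
  rw [hW]
  refine ⟨((𝓕 (ψ.wignerKernel q)).integrable.comp_mul_left' (by simp [ha.ne'])).const_mul _, ?_⟩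
  have ha' : (a : ℂ) ≠ 0 := by exact_mod_cast ha.ne'
  rw [integral_const_mul, SchwartzMap.integral_fourier_comp_mul_left,
    SchwartzMap.wignerKernel_apply_zero, inv_neg, inv_inv, abs_neg, abs_of_pos ha,
    Complex.real_smul, ← mul_assoc, inv_mul_cancel₀ ha', one_mul]
end
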